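/- Let Ω ⊆ ℝⁿ be a locally closed and unbounded set and let u ∈ Ω^∞ ∩ 𝕊. Then the directional normal cone at infinity can equivalently be computed with limiting normal cones in place of Fréchet normal cones: N_Ω(∞;u) = {ξ ∈ ℝⁿ : ∃ x_k ∈ Ω with ‖x_k‖ → ∞, x_k/‖x_k‖ → u, and ξ_k ∈ N(x_k;Ω) with ξ_k → ξ}. -/

import Mathlib

open Filter Topology Set
open scoped RealInnerProductSpace Pointwise

noncomputable section

/-- `ℝⁿ` with the Euclidean structure. -/
abbrev Eu (n : ℕ) := EuclideanSpace ℝ (Fin n)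

/-- The Fréchet (regular) normal cone to `Ω ⊆ ℝⁿ` at `xc` (empty when `xc ∉ Ω`):
`v` belongs to it iff `limsup_{x → xc, x ∈ Ω} ⟪v, x - xc⟫ / ‖x - xc‖ ≤ 0`. -/
def frechetNC {n : ℕ} (Ω : Set (Eu n)) (xc : Eu n) : Set (Eu n) :=
  {v | xc ∈ Ω ∧ ∀ ε > 0, ∃ δ > 0, ∀ x ∈ Ω, ‖x - xc‖ < δ →
        ⟪v, x - xc⟫ ≤ ε * ‖x - xc‖}

/-- `x_k →ᵘ ∞` : `‖x_k‖ → ∞` and `x_k / ‖x_k‖ → u`. -/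
def TendstoDirInfty {n : ℕ} (x : ℕ → Eu n) (u : Eu n) : Prop :=
  Tendsto (fun k => ‖x k‖) atTop atTop ∧
  Tendsto (fun k => ‖x k‖⁻¹ • x k) atTop (𝓝 u)

/-- The asymptotic cone of `D`: all `u` such that `x_k / t_k → u` for some
`t_k → +∞` and `x_k ∈ D`. -/
def asymptoticConeEu {n : ℕ} (D : Set (Eu n)) : Set (Eu n) :=
  {u | ∃ (t : ℕ → ℝ) (x : ℕ → Eu n), Tendsto t atTop atTop ∧ (∀ k, x k ∈ D) ∧
      Tendsto (fun k => (t k)⁻¹ • x k) atTop (𝓝 u)}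

/-- The normal cone to `Ω` in direction `u` at infinity:
limits of Fréchet normals along sequences `x_k →^{Ω,u} ∞`. -/
def dirNCInfty {n : ℕ} (Ω : Set (Eu n)) (u : Eu n) : Set (Eu n) :=
  {ξ | ∃ (x w : ℕ → Eu n), (∀ k, x k ∈ Ω) ∧ TendstoDirInfty x u ∧
      (∀ k, w k ∈ frechetNC Ω (x k)) ∧ Tendsto w atTop (𝓝 ξ)}

/-- The limiting (Mordukhovich) normal cone to `Ω` at `xc`: all limits of
Fréchet normals `w_k ∈ N̂(x_k; Ω)` with `x_k ∈ Ω`, `x_k → xc`. -/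
def limitingNC {n : ℕ} (Ω : Set (Eu n)) (xc : Eu n) : Set (Eu n) :=
  {v | ∃ (x w : ℕ → Eu n), (∀ k, x k ∈ Ω) ∧ Tendsto x atTop (𝓝 xc) ∧
      (∀ k, w k ∈ frechetNC Ω (x k)) ∧ Tendsto w atTop (𝓝 v)}

lemma dirinfty_of_close {n : ℕ} {x y : ℕ → Eu n} {u : Eu n}
    (hx : TendstoDirInfty x u) (h : Tendsto (fun k => y k - x k) atTop (𝓝 0)) :
    TendstoDirInfty y u := by
  obtain ⟨h1, h2⟩ := hx
  have hnorm0 : Tendsto (fun k => ‖y k - x k‖) atTop (𝓝 0) := by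
    simpa using h.norm
  have hdle : ∀ᶠ k in atTop, ‖y k - x k‖ ≤ 1 := by
    filter_upwards [hnorm0.eventually (eventually_le_nhds one_pos)] with k hk using hk
  have hy1 : Tendsto (fun k => ‖y k‖) atTop atTop := by
    apply tendsto_atTop_mono' atTop (f₁ := fun k => ‖x k‖ + (-1))
    · filter_upwards [hdle] with k hk
      have := norm_sub_norm_le (x k) (y k)
      rw [norm_sub_rev (x k)] at this
      linarith
    · exact tendsto_atTop_add_const_right atTop (-1) h1
  refine ⟨hy1, ?_⟩
  have hdiff0 : Tendsto (fun k => ‖y k‖⁻¹ • y k - ‖x k‖⁻¹ • x k) atTop (𝓝 0) := by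
    apply squeeze_zero_norm' (a := fun k => 2 * ‖y k - x k‖)
    · filter_upwards [h1.eventually_ge_atTop 1, hy1.eventually_ge_atTop 1] with k ha1 hb1
      set a := ‖x k‖ with hadef
      set b := ‖y k‖ with hbdef
      have ha0 : (0:ℝ) < a := by linarith
      have hb0 : (0:ℝ) < b := by linarith
      have key : b⁻¹ • y k - a⁻¹ • x k = b⁻¹ • (y k - x k) + (b⁻¹ - a⁻¹) • x k := by
        module
      have habs : |a - b| ≤ ‖y k - x k‖ := by
        rw [norm_sub_rev]
        exact abs_norm_sub_norm_le (x k) (y k)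
      have t1 : ‖b⁻¹ • (y k - x k)‖ ≤ ‖y k - x k‖ := by
        rw [norm_smul, Real.norm_eq_abs, abs_of_pos (by positivity)]
        have hbinv : b⁻¹ ≤ 1 := by
          rw [inv_le_one_iff₀]; right; exact hb1
        nlinarith [norm_nonneg (y k - x k)]
      have t2 : ‖(b⁻¹ - a⁻¹) • x k‖ ≤ ‖y k - x k‖ := by
        rw [norm_smul, Real.norm_eq_abs, ← hadef]
        have e : b⁻¹ - a⁻¹ = (a - b) / (a * b) := by
          rw [eq_div_iff (mul_pos ha0 hb0).ne']
          field_simp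
        rw [e, abs_div, abs_of_pos (by positivity : (0:ℝ) < a * b),
          div_mul_eq_mul_div, div_le_iff₀ (by positivity)]
        have step1 : |a - b| * a ≤ ‖y k - x k‖ * a :=
          mul_le_mul_of_nonneg_right habs ha0.le
        have step2 : ‖y k - x k‖ * a ≤ ‖y k - x k‖ * (a * b) :=
          mul_le_mul_of_nonneg_left (le_mul_of_one_le_right ha0.le hb1)
            (norm_nonneg (y k - x k))
        linarith
      calc ‖b⁻¹ • y k - a⁻¹ • x k‖
          ≤ ‖b⁻¹ • (y k - x k)‖ + ‖(b⁻¹ - a⁻¹) • x k‖ := by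
            rw [key]; exact norm_add_le _ _
        _ ≤ 2 * ‖y k - x k‖ := by linarith
    · simpa using hnorm0.const_mul 2
  have := hdiff0.add h2
  simpa using this

lemma one_div_succ_pos (k : ℕ) : (0:ℝ) < 1 / ((k:ℝ) + 1) := by positivity

/-- For a locally closed unbounded `Ω` and `u ∈ Ω^∞ ∩ 𝕊`, the
directional normal cone at infinity can be computed with limiting normal cones. -/
theorem dirNCInfty_eq_via_limitingNC {n : ℕ} (Ω : Set (Eu n))
    (hloc : ∀ x ∈ Ω, ∃ U ∈ 𝓝 x, IsClosed (Ω ∩ U))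
    (hunb : ¬ Bornology.IsBounded Ω)
    (u : Eu n) (hu : u ∈ asymptoticConeEu Ω) (hu1 : ‖u‖ = 1) :
    dirNCInfty Ω u =
      {ξ | ∃ (x w : ℕ → Eu n), (∀ k, x k ∈ Ω) ∧ TendstoDirInfty x u ∧
          (∀ k, w k ∈ limitingNC Ω (x k)) ∧ Tendsto w atTop (𝓝 ξ)} := by
  ext ξ
  constructor
  · rintro ⟨x, w, hxΩ, hxu, hwF, hwξ⟩
    exact ⟨x, w, hxΩ, hxu, fun k =>
      ⟨fun _ => x k, fun _ => w k, fun _ => hxΩ k, tendsto_const_nhds,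
        fun _ => hwF k, tendsto_const_nhds⟩, hwξ⟩
  · rintro ⟨x, w, hxΩ, hxu, hwL, hwξ⟩
    have H : ∀ k, ∃ (y v : Eu n), y ∈ Ω ∧ v ∈ frechetNC Ω y ∧
        ‖y - x k‖ ≤ 1 / ((k:ℝ) + 1) ∧ ‖v - w k‖ ≤ 1 / ((k:ℝ) + 1) := by
      intro k
      obtain ⟨a, b, haΩ, hax, hbF, hbw⟩ := hwL k
      obtain ⟨N1, hN1⟩ := (Metric.tendsto_atTop.mp hax) _ (one_div_succ_pos k)
      obtain ⟨N2, hN2⟩ := (Metric.tendsto_atTop.mp hbw) _ (one_div_succ_pos k)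
      refine ⟨a (max N1 N2), b (max N1 N2), haΩ _, hbF _, ?_, ?_⟩
      · have := hN1 _ (le_max_left N1 N2)
        rw [dist_eq_norm] at this; linarith
      · have := hN2 _ (le_max_right N1 N2)
        rw [dist_eq_norm] at this; linarith
    choose y v hyΩ hvF hyx hvw using H
    have hseq0 : Tendsto (fun k : ℕ => 1 / ((k:ℝ) + 1)) atTop (𝓝 0) :=
      tendsto_one_div_add_atTop_nhds_zero_nat
    have hyx0 : Tendsto (fun k => y k - x k) atTop (𝓝 0) :=
      squeeze_zero_norm hyx hseq0
    have hvw0 : Tendsto (fun k => v k - w k) atTop (𝓝 0) :=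
      squeeze_zero_norm hvw hseq0
    have hv : Tendsto v atTop (𝓝 ξ) := by
      have := hvw0.add hwξ
      simpa using this
    exact ⟨y, v, hyΩ, dirinfty_of_close hxu hyx0, hvF, hv⟩
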